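/- Let p be a real number of the form p = 2i/(2j+1) with i, j positive integers and p > 2. Let (x_n)_{n≥1} be a real sequence with ∑_{n=1}^∞ |x_n|^p < ∞, and set y_n = (1/n)·∑_{k=1}^n x_k. Then ∑_{n=1}^∞ |y_n - x_n|^p ≤ (1/m_p) · ∑_{n=1}^∞ |x_n|^p. -/
import Mathlib

/-- `m_p`: the minimum value of `f_p(t) = p t^(p-1) + (1-t)^p - t^p` on `[0, 1/2]`. -/
noncomputable def mVal (p : ℝ) : ℝ :=
  sInf ((fun t : ℝ => p * t ^ (p - 1) + (1 - t) ^ p - t ^ p) '' Set.Icc 0 (1 / 2))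


private lemma rpow_sub_one_mul {q X : ℝ} (hq : q ≠ 0) (hX : 0 ≤ X) :
    X ^ (q - 1) * X = X ^ q := by
  have h := Real.rpow_add' hX (show (q - 1) + 1 ≠ 0 by rw [sub_add_cancel]; exact hq)
  rw [sub_add_cancel] at h
  rw [h, Real.rpow_one]

private lemma tangent_rpow {q : ℝ} (hq : 1 < q) {A B : ℝ} (hA : 0 ≤ A) (hB : 0 ≤ B) :
    A ^ q + q * A ^ (q - 1) * (B - A) ≤ B ^ q := by
  rcases eq_or_lt_of_le hA with h0 | hA'
  · rw [← h0, Real.zero_rpow (by linarith : q ≠ 0),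
      Real.zero_rpow (by intro h; rw [sub_eq_zero] at h; linarith)]
    simpa using Real.rpow_nonneg hB q
  · have hAne : A ≠ 0 := ne_of_gt hA'
    have hs : -1 ≤ B / A - 1 := by
      have : 0 ≤ B / A := div_nonneg hB hA
      linarith
    have hber := one_add_mul_self_le_rpow_one_add hs (le_of_lt hq)
    have h1 : (1 : ℝ) + (B / A - 1) = B / A := by ring
    rw [h1] at hber
    have hmul := mul_le_mul_of_nonneg_left hber (le_of_lt (Real.rpow_pos_of_pos hA' q))
    have e1 : A ^ q * (B / A) ^ q = B ^ q := by
      rw [← Real.mul_rpow hA (div_nonneg hB hA)]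
      rw [mul_div_cancel₀ B hAne]
    have e2 : A ^ q * (1 + q * (B / A - 1)) = A ^ q + q * A ^ (q - 1) * (B - A) := by
      have hAq : A ^ q = A ^ (q - 1) * A := (rpow_sub_one_mul (by linarith) hA).symm
      rw [hAq]
      field_simp
    rw [e1, e2] at hmul
    exact hmul

private lemma superadd_rpow {q : ℝ} (hq : 1 < q) {X Y : ℝ} (hX : 0 ≤ X) (hY : 0 ≤ Y) :
    X ^ q + Y ^ q ≤ (X + Y) ^ q := by
  have hq0 : q ≠ 0 := by linarith
  have hXY : 0 ≤ X + Y := by linarith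
  have h1 : X ^ q ≤ (X + Y) ^ (q - 1) * X := by
    rw [← rpow_sub_one_mul hq0 hX]
    exact mul_le_mul_of_nonneg_right
      (Real.rpow_le_rpow hX (by linarith) (by linarith)) hX
  have h2 : Y ^ q ≤ (X + Y) ^ (q - 1) * Y := by
    rw [← rpow_sub_one_mul hq0 hY]
    exact mul_le_mul_of_nonneg_right
      (Real.rpow_le_rpow hY (by linarith) (by linarith)) hY
  have h3 : (X + Y) ^ (q - 1) * X + (X + Y) ^ (q - 1) * Y = (X + Y) ^ q := by
    rw [← mul_add]
    exact rpow_sub_one_mul hq0 hXY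
  linarith

private lemma tangent_abs {p : ℝ} (hp2 : 2 < p) (a b : ℝ) :
    |b| ^ p + p * (b * |b| ^ (p - 2)) * (a - b) ≤ |a| ^ p := by
  have H : ∀ a b : ℝ, 0 ≤ b → |b| ^ p + p * (b * |b| ^ (p - 2)) * (a - b) ≤ |a| ^ p := by
    intro a b hb
    have hb' : |b| = b := abs_of_nonneg hb
    rw [hb']
    have hKey : b ^ p + p * b ^ (p - 1) * (|a| - b) ≤ |a| ^ p :=
      tangent_rpow (by linarith) hb (abs_nonneg a)
    have e : b * b ^ (p - 2) = b ^ (p - 1) := by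
      rw [mul_comm]
      have : p - 1 - 1 = p - 2 := by ring
      rw [← this]; exact rpow_sub_one_mul (by intro h; nlinarith [h]) hb
    have hmono : p * (b * b ^ (p - 2)) * (a - b) ≤ p * b ^ (p - 1) * (|a| - b) := by
      rw [e]
      exact mul_le_mul_of_nonneg_left (sub_le_sub_right (le_abs_self a) b)
        (by positivity)
    linarith
  rcases le_or_gt 0 b with hb | hb
  · exact H a b hb
  · have h := H (-a) (-b) (by linarith)
    rw [abs_neg, abs_neg] at h
    have e : p * (-b * |b| ^ (p - 2)) * (-a - -b) = p * (b * |b| ^ (p - 2)) * (a - b) := by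
      ring
    rw [e] at h
    exact h

private lemma mVal_facts {p : ℝ} (hp2 : 2 < p) :
    0 < mVal p ∧ mVal p ≤ 1 ∧
      ∀ t ∈ Set.Icc (0 : ℝ) (1 / 2), mVal p ≤ p * t ^ (p - 1) + (1 - t) ^ p - t ^ p := by
  set f : ℝ → ℝ := fun t => p * t ^ (p - 1) + (1 - t) ^ p - t ^ p with hf
  have hcont : Continuous f := by
    have h1 : Continuous fun t : ℝ => t ^ (p - 1) := by
      rw [continuous_iff_continuousAt]
      intro x
      exact Real.continuousAt_rpow_const x _ (Or.inr (by linarith))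
    have h2 : Continuous fun t : ℝ => t ^ p := by
      rw [continuous_iff_continuousAt]
      intro x
      exact Real.continuousAt_rpow_const x _ (Or.inr (by linarith))
    exact (((continuous_const.mul h1).add (h2.comp (continuous_const.sub continuous_id))).sub h2)
  have hne : ((f '' Set.Icc 0 (1 / 2))).Nonempty :=
    ⟨f 0, Set.mem_image_of_mem f (by constructor <;> norm_num)⟩
  have hcomp : IsCompact (f '' Set.Icc 0 (1 / 2)) := (isCompact_Icc.image hcont)
  have hbdd : BddBelow (f '' Set.Icc 0 (1 / 2)) := hcomp.bddBelow
  have hlb : ∀ t ∈ Set.Icc (0 : ℝ) (1 / 2), mVal p ≤ f t := fun t ht =>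
    csInf_le hbdd (Set.mem_image_of_mem f ht)
  have hf0 : f 0 = 1 := by
    simp only [hf]
    rw [Real.zero_rpow (by intro h; nlinarith [h] : p - 1 ≠ 0),
      Real.zero_rpow (by positivity : p ≠ 0)]
    norm_num
  have hle1 : mVal p ≤ 1 := hf0 ▸ hlb 0 (by constructor <;> norm_num)
  have hmem : mVal p ∈ f '' Set.Icc 0 (1 / 2) := hcomp.sInf_mem hne
  obtain ⟨t₀, ht₀, heq⟩ := hmem
  have hpos : 0 < mVal p := by
    rw [← heq]
    obtain ⟨h0, h12⟩ := ht₀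
    have hd : t₀ ^ p ≤ (1 - t₀) ^ p :=
      Real.rpow_le_rpow h0 (by linarith) (by linarith)
    rcases eq_or_lt_of_le h0 with h | h
    · simp only [hf, ← h]
      rw [Real.zero_rpow (by intro h; nlinarith [h] : p - 1 ≠ 0),
        Real.zero_rpow (by positivity : p ≠ 0)]
      norm_num
    · have : 0 < p * t₀ ^ (p - 1) := by positivity
      simp only [hf]; linarith
  exact ⟨hpos, hle1, hlb⟩

set_option maxHeartbeats 1000000 in
private lemma phi_ge {p : ℝ} (hp2 : 2 < p) (c : ℝ) :
    mVal p ≤ |1 + c| ^ p - |c| ^ p - p * (c * |c| ^ (p - 2)) := by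
  obtain ⟨hmpos, hm1, hmlb⟩ := mVal_facts hp2
  have hp0 : (0:ℝ) < p := by linarith
  have hq : (1:ℝ) < p / 2 := by linarith
  set q : ℝ := p / 2 with hqdef
  have hqq : q + q = p := by rw [hqdef]; ring
  have sq_eq : ∀ s : ℝ, s ^ (2:ℝ) = s * s := fun s => by
    rw [show (2:ℝ) = ((2:ℕ):ℝ) by norm_num, Real.rpow_natCast]; ring
  rcases le_or_gt 0 c with hc | hc
  · -- case c ≥ 0 : show 1 + c^p + p c^(p-1) ≤ (1+c)^p
    have h1c : (0:ℝ) ≤ 1 + c := by linarith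
    rw [abs_of_nonneg h1c, abs_of_nonneg hc]
    have ecc : c * c ^ (p - 2) = c ^ (p - 1) := by
      rw [mul_comm]
      have h : p - 1 - 1 = p - 2 := by ring
      rw [← h]; exact rpow_sub_one_mul (by intro h; nlinarith [h]) hc
    rw [ecc]
    have e1 : (1 + c) ^ p = (1 + (2 * c + c ^ 2)) ^ q := by
      have h' : (1:ℝ) + (2 * c + c ^ 2) = (1 + c) ^ (2:ℝ) := by rw [sq_eq]; ring
      rw [h', ← Real.rpow_mul h1c]
      congr 1; rw [hqdef]; ring
    have h2 : (1:ℝ) ^ q + (2 * c + c ^ 2) ^ q ≤ (1 + (2 * c + c ^ 2)) ^ q :=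
      superadd_rpow hq (by norm_num) (by positivity)
    rw [Real.one_rpow] at h2
    have e3 : (2 * c + c ^ 2) ^ q = c ^ q * (c + 2) ^ q := by
      rw [← Real.mul_rpow hc (by linarith)]
      ring_nf
    have h4 : c ^ q + q * c ^ (q - 1) * 2 ≤ (c + 2) ^ q := by
      have h := tangent_rpow hq hc (show (0:ℝ) ≤ c + 2 by linarith)
      have e : (c + 2 - c) = (2:ℝ) := by ring
      rw [e] at h
      linarith
    have h5 : c ^ q * (c ^ q + q * c ^ (q - 1) * 2) ≤ c ^ q * (c + 2) ^ q :=
      mul_le_mul_of_nonneg_left h4 (Real.rpow_nonneg hc q)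
    have e6 : c ^ q * c ^ q = c ^ p := by
      rw [← Real.rpow_add' hc (by rw [hqq]; positivity), hqq]
    have e7 : c ^ q * c ^ (q - 1) = c ^ (p - 1) := by
      rw [← Real.rpow_add' hc (show q + (q - 1) ≠ 0 by intro h; nlinarith [h])]
      congr 1; linarith
    have hq2 : 2 * q = p := by rw [hqdef]; ring
    have e8 : c ^ q * (c ^ q + q * c ^ (q - 1) * 2) = c ^ p + p * c ^ (p - 1) := by
      linear_combination e6 + (2 * q) * e7 + c ^ (p - 1) * hq2
    rw [e8] at h5
    rw [e1]; rw [e3] at h2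
    linarith
  · rcases le_or_gt (-1) c with hc1 | hc1
    · -- case -1 ≤ c < 0 : t = -c ∈ (0, 1]
      set t : ℝ := -c with htdef
      have ht0 : 0 < t := by rw [htdef]; linarith
      have ht1 : t ≤ 1 := by rw [htdef]; linarith
      have e0 : |c| = t := by rw [abs_of_neg hc]
      have e1 : |1 + c| = 1 - t := by
        rw [abs_of_nonneg (by linarith : (0:ℝ) ≤ 1 + c), htdef]; ring
      have ect : c * |c| ^ (p - 2) = -(t ^ (p - 1)) := by
        rw [e0]
        have h' : t * t ^ (p - 2) = t ^ (p - 1) := by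
          rw [mul_comm]
          have h : p - 1 - 1 = p - 2 := by ring
          rw [← h]; exact rpow_sub_one_mul (by intro h; nlinarith [h]) ht0.le
        rw [show c = -t by rw [htdef]; ring, ← h']; ring
      rw [ect, e0, e1]
      have goal_eq : (1 - t) ^ p - t ^ p - p * -(t ^ (p - 1))
          = p * t ^ (p - 1) + (1 - t) ^ p - t ^ p := by ring
      rw [goal_eq]
      rcases le_or_gt t (1/2) with ht12 | ht12
      · exact hmlb t ⟨ht0.le, ht12⟩
      · set a : ℝ := t
        set b : ℝ := 1 - t with hbdef
        have hb0 : 0 ≤ b := by rw [hbdef]; linarith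
        have hba : b ≤ a := by rw [hbdef]; linarith
        have ha0 : 0 < a := ht0
        have hmb : mVal p ≤ p * b ^ (p - 1) + (1 - b) ^ p - b ^ p :=
          hmlb b ⟨hb0, by rw [hbdef]; linarith⟩
        have e1b : (1 : ℝ) - b = a := by rw [hbdef]; ring
        rw [e1b] at hmb
        have hsum : a + b = 1 := by rw [hbdef]; ring
        have ea : a ^ (p - 1) * a = a ^ p := rpow_sub_one_mul (by positivity) ha0.le
        have eb : b ^ (p - 1) * b = b ^ p := rpow_sub_one_mul (by positivity) hb0
        have ea2 : a ^ (p - 2) * a = a ^ (p - 1) := by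
          have h : p - 1 - 1 = p - 2 := by ring
          rw [← h]; exact rpow_sub_one_mul (by intro h; nlinarith [h]) ha0.le
        have eb2 : b ^ (p - 2) * b = b ^ (p - 1) := by
          have h : p - 1 - 1 = p - 2 := by ring
          rw [← h]; exact rpow_sub_one_mul (by intro h; nlinarith [h]) hb0
        have h1 : b ^ (p - 1) ≤ a ^ (p - 1) := Real.rpow_le_rpow hb0 hba (by linarith)
        have h2 : b ^ (p - 2) ≤ a ^ (p - 2) := Real.rpow_le_rpow hb0 hba (by linarith)
        have h3 : 0 ≤ b * a ^ (p - 1) - a * b ^ (p - 1) := by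
          have e : b * a ^ (p - 1) - a * b ^ (p - 1)
              = a * b * (a ^ (p - 2) - b ^ (p - 2)) := by
            rw [← ea2, ← eb2]; ring
          rw [e]
          have h2' := sub_nonneg.mpr h2
          positivity
        have e : a ^ (p - 1) - b ^ (p - 1) - (a ^ p - b ^ p)
            = b * a ^ (p - 1) - a * b ^ (p - 1) := by
          rw [← ea, ← eb]
          linear_combination (b ^ (p-1) - a ^ (p-1)) * hsum
        have h4 : 2 * (a ^ p - b ^ p) ≤ p * (a ^ (p - 1) - b ^ (p - 1)) := by
          nlinarith [mul_nonneg (show (0:ℝ) ≤ p - 2 by linarith) (sub_nonneg.mpr h1), h3, e]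
        linarith
    · -- case c < -1 : t = -c > 1
      set t : ℝ := -c with htdef
      have ht1 : 1 < t := by rw [htdef]; linarith
      have ht0 : (0:ℝ) < t := by linarith
      have e0 : |c| = t := by rw [abs_of_neg hc]
      have e1 : |1 + c| = t - 1 := by
        rw [abs_of_nonpos (by linarith : 1 + c ≤ 0), htdef]; ring
      have ect : c * |c| ^ (p - 2) = -(t ^ (p - 1)) := by
        rw [e0]
        have h' : t * t ^ (p - 2) = t ^ (p - 1) := by
          rw [mul_comm]
          have h : p - 1 - 1 = p - 2 := by ring
          rw [← h]; exact rpow_sub_one_mul (by intro h; nlinarith [h]) ht0.le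
        rw [show c = -t by rw [htdef]; ring, ← h']; ring
      rw [ect, e0, e1]
      have ht10 : (0:ℝ) ≤ t - 1 := by linarith
      have eA : (t ^ (2:ℝ)) ^ q = t ^ p := by
        rw [← Real.rpow_mul ht0.le]; congr 1; rw [hqdef]; ring
      have eB : ((t - 1) ^ (2:ℝ)) ^ q = (t - 1) ^ p := by
        rw [← Real.rpow_mul ht10]; congr 1; rw [hqdef]; ring
      have eA1 : (t ^ (2:ℝ)) ^ (q - 1) = t ^ (p - 2) := by
        rw [← Real.rpow_mul ht0.le]; congr 1; rw [hqdef]; ring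
      have htan := tangent_rpow hq (Real.rpow_nonneg ht0.le 2) (Real.rpow_nonneg ht10 2)
      rw [eA, eB, eA1] at htan
      have e2 : (t - 1) ^ (2:ℝ) - t ^ (2:ℝ) = 1 - 2 * t := by
        rw [sq_eq, sq_eq]; ring
      rw [e2] at htan
      have e3 : t ^ (p - 2) * t = t ^ (p - 1) := by
        have h : p - 1 - 1 = p - 2 := by ring
        rw [← h]; exact rpow_sub_one_mul (by intro h; nlinarith [h]) ht0.le
      have e4 : (1:ℝ) ≤ t ^ (p - 2) := by
        calc (1:ℝ) = 1 ^ (p - 2) := (Real.one_rpow _).symm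
        _ ≤ t ^ (p - 2) := Real.rpow_le_rpow (by norm_num) ht1.le (by linarith)
      have hq2 : q * 2 = p := by rw [hqdef]; ring
      have hexp : q * t ^ (p - 2) * (1 - 2 * t) = q * t ^ (p - 2) - p * t ^ (p - 1) := by
        linear_combination (-2 * q) * e3 - t ^ (p - 1) * hq2
      rw [hexp] at htan
      have hone : (1:ℝ) ≤ q * t ^ (p - 2) := by
        have h := mul_le_mul_of_nonneg_left e4 (show (0:ℝ) ≤ q by linarith)
        rw [mul_one] at h; linarith
      linarith

private lemma key_ineq {p : ℝ} (hp2 : 2 < p) (b u : ℝ) :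
    mVal p * |u| ^ p ≤ |b + u| ^ p - |b| ^ p - p * u * (b * |b| ^ (p - 2)) := by
  have hp0 : (0:ℝ) < p := by linarith
  rcases eq_or_ne u 0 with rfl | hu
  · simp [Real.zero_rpow (ne_of_gt hp0)]
  · have hu' : 0 < |u| := abs_pos.mpr hu
    set c : ℝ := b / u with hcdef
    have hb : b = u * c := by rw [hcdef]; field_simp
    have hup : 0 < |u| ^ p := Real.rpow_pos_of_pos hu' p
    have e1 : |b + u| ^ p = |u| ^ p * |1 + c| ^ p := by
      rw [show b + u = u * (1 + c) by rw [hb]; ring, abs_mul,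
        Real.mul_rpow (abs_nonneg u) (abs_nonneg (1 + c))]
    have e2 : |b| ^ p = |u| ^ p * |c| ^ p := by
      rw [hb, abs_mul, Real.mul_rpow (abs_nonneg u) (abs_nonneg c)]
    have h2 : |u| ^ (2:ℝ) = u ^ 2 := by
      rw [show (2:ℝ) = ((2:ℕ):ℝ) by norm_num, Real.rpow_natCast, sq_abs]
    have h3 : |u| ^ (2:ℝ) * |u| ^ (p - 2) = |u| ^ p := by
      rw [← Real.rpow_add hu']; congr 1; ring
    have e3 : u * (b * |b| ^ (p - 2)) = |u| ^ p * (c * |c| ^ (p - 2)) := by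
      calc u * (b * |b| ^ (p - 2)) = u ^ 2 * c * (|u| ^ (p - 2) * |c| ^ (p - 2)) := by
            rw [hb, abs_mul, Real.mul_rpow (abs_nonneg u) (abs_nonneg c)]; ring
      _ = (|u| ^ (2:ℝ) * |u| ^ (p - 2)) * (c * |c| ^ (p - 2)) := by rw [h2]; ring
      _ = |u| ^ p * (c * |c| ^ (p - 2)) := by rw [h3]
    have hphi := phi_ge hp2 c
    have hm := mul_le_mul_of_nonneg_left hphi (le_of_lt hup)
    calc mVal p * |u| ^ p = |u| ^ p * mVal p := by ring
    _ ≤ |u| ^ p * (|1 + c| ^ p - |c| ^ p - p * (c * |c| ^ (p - 2))) := hm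
    _ = |b + u| ^ p - |b| ^ p - p * u * (b * |b| ^ (p - 2)) := by
        rw [e1, e2]; linear_combination p * e3

private lemma step_ineq {p : ℝ} (hp2 : 2 < p) (ν a b : ℝ) (hν : 0 ≤ ν) :
    mVal p * |ν * (a - b)| ^ p + (ν + 1) * |b| ^ p - ν * |a| ^ p
      ≤ |(ν + 1) * b - ν * a| ^ p := by
  set u : ℝ := ν * (b - a) with hudef
  have h1 := key_ineq hp2 b u
  have h2 := tangent_abs hp2 a b
  have h3 : (ν + 1) * b - ν * a = b + u := by rw [hudef]; ring
  rw [h3]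
  have h4 : |ν * (a - b)| = |u| := by
    rw [hudef, abs_mul, abs_mul, abs_sub_comm]
  rw [h4]
  -- multiply h2 by ν
  have h5 := mul_le_mul_of_nonneg_left h2 hν
  have e : ν * (p * (b * |b| ^ (p - 2)) * (a - b)) = -(p * u * (b * |b| ^ (p - 2))) := by
    rw [hudef]; ring
  nlinarith [h5, h1, e]



/-- Theorem 3 (discrete): for `p = 2i/(2j+1) > 2` and a real sequence `(x_n)_{n≥1}` with
`∑ |x_n|^p < ∞`, setting `y_n = (1/n) ∑_{k=1}^n x_k`, one has
`∑ |y_n - x_n|^p ≤ (1/m_p) ∑ |x_n|^p`. (Sequences are indexed so that term `n` of the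
paper is `x (n+1)` here, `n : ℕ`.) -/
theorem stmt12 (p : ℝ) (i j : ℕ) (hi : 0 < i) (hj : 0 < j)
    (hp : p = 2 * (i : ℝ) / (2 * (j : ℝ) + 1)) (hp2 : 2 < p)
    (x : ℕ → ℝ) (hx : Summable fun n : ℕ => |x (n + 1)| ^ p)
    (y : ℕ → ℝ)
    (hy : ∀ n : ℕ, y n = (1 / ((n : ℝ) + 1)) * ∑ k ∈ Finset.range (n + 1), x (k + 1)) :
    (Summable fun n : ℕ => |y n - x (n + 1)| ^ p) ∧
    ∑' n : ℕ, |y n - x (n + 1)| ^ p ≤ (mVal p)⁻¹ * ∑' n : ℕ, |x (n + 1)| ^ p := by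
  obtain ⟨hmpos, hm1, hmlb⟩ := mVal_facts hp2
  have hp0 : (0:ℝ) < p := by linarith
  set m : ℝ := mVal p with hmdef
  set z : ℕ → ℝ := fun n => y n - x (n + 1) with hzdef
  have hps : ∀ n : ℕ, ∑ k ∈ Finset.range (n + 1), x (k + 1) = ((n : ℝ) + 1) * y n := by
    intro n
    rw [hy n]
    have h : ((n : ℝ) + 1) ≠ 0 := by positivity
    field_simp
  have key : ∀ N : ℕ, m * ∑ n ∈ Finset.range (N + 1), |z n| ^ p
      + ((N : ℝ) + 1) * |y N| ^ p ≤ ∑ n ∈ Finset.range (N + 1), |x (n + 1)| ^ p := by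
    intro N
    induction N with
    | zero =>
      have h0 : y 0 = x 1 := by
        rw [hy 0]
        norm_num
      have hz0 : z 0 = 0 := by rw [hzdef]; simp [h0]
      norm_num [Finset.sum_range_one, hz0, h0, abs_zero, Real.zero_rpow (ne_of_gt hp0)]
    | succ N ih =>
      have e1 := hps (N + 1)
      have e2 := hps N
      rw [Finset.sum_range_succ] at e1
      rw [e2] at e1
      have hx2 : x (N + 2) = ((N : ℝ) + 2) * y (N + 1) - ((N : ℝ) + 1) * y N := by
        push_cast at e1 ⊢
        linarith
      have hstep := step_ineq hp2 ((N : ℝ) + 1) (y N) (y (N + 1)) (by positivity)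
      have hz1 : z (N + 1) = ((N : ℝ) + 1) * (y N - y (N + 1)) := by
        rw [hzdef]
        show y (N + 1) - x (N + 1 + 1) = _
        rw [show N + 1 + 1 = N + 2 from rfl, hx2]
        push_cast
        ring
      rw [Finset.sum_range_succ (fun n => |z n| ^ p) (N + 1),
        Finset.sum_range_succ (fun n => |x (n + 1)| ^ p) (N + 1)]
      have habs : |x (N + 1 + 1)| = |((N : ℝ) + 1 + 1) * y (N + 1) - ((N : ℝ) + 1) * y N| := by
        rw [show N + 1 + 1 = N + 2 from rfl, hx2]
        congr 1
        ring
      have hzabs : |z (N + 1)| = |((N : ℝ) + 1) * (y N - y (N + 1))| := by rw [hz1]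
      rw [habs, hzabs]
      rw [← hmdef] at hstep
      push_cast
      push_cast at hstep ih
      nlinarith [hstep, ih]
  set S : ℝ := ∑' n : ℕ, |x (n + 1)| ^ p with hSdef
  have hS0 : 0 ≤ S := tsum_nonneg fun n => Real.rpow_nonneg (abs_nonneg _) p
  have hpart : ∀ N : ℕ, ∑ n ∈ Finset.range N, m * |z n| ^ p ≤ S := by
    intro N
    have hmulsum : ∑ n ∈ Finset.range N, m * |z n| ^ p
        = m * ∑ n ∈ Finset.range N, |z n| ^ p := by rw [Finset.mul_sum]
    rw [hmulsum]
    rcases N with _ | M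
    · simpa using hS0
    · have h1 := key M
      have h2 : ∑ n ∈ Finset.range (M + 1), |x (n + 1)| ^ p ≤ S :=
        Summable.sum_le_tsum _ (fun n _ => Real.rpow_nonneg (abs_nonneg _) p) hx
      have h3 : 0 ≤ ((M : ℝ) + 1) * |y M| ^ p := by positivity
      linarith
  have hsummable : Summable fun n => m * |z n| ^ p :=
    summable_of_sum_range_le (fun n => by positivity) hpart
  have hsz : Summable fun n => |z n| ^ p := by
    have h := hsummable.mul_left m⁻¹
    have e : (fun n => m⁻¹ * (m * |z n| ^ p)) = fun n => |z n| ^ p := by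
      funext n
      rw [← mul_assoc, inv_mul_cancel₀ (ne_of_gt hmpos), one_mul]
    rwa [e] at h
  refine ⟨hsz, ?_⟩
  have htsum : ∑' n, (m * |z n| ^ p) ≤ S :=
    Real.tsum_le_of_sum_range_le (fun n => by positivity) hpart
  rw [tsum_mul_left] at htsum
  have hfin : ∑' n, |z n| ^ p ≤ m⁻¹ * S := by
    have h := mul_le_mul_of_nonneg_left htsum (le_of_lt (inv_pos.mpr hmpos))
    rwa [← mul_assoc, inv_mul_cancel₀ (ne_of_gt hmpos), one_mul] at h
  exact hfin
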